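/- Suppose a stopping time τ with respect to the frequency filtration satisfies R(μ,τ)² ≤ C·R(μ, m_s)² for the balanced oracle m_s = m_s(μ) and some C ≥ 1. Then for any μ̄ ∈ R^D with μ̄_i = μ_i for all i ≤ 3C·m_s, one has R(μ̄,τ)² ≥ (1/3)·B²_{⌊3C m_s⌋}(μ̄). -/

import Mathlib

open MeasureTheory ProbabilityTheory Real Finset

/-- The risk `R(ν,τ)² = E_ν[‖μ̂^(τ) − ν‖²]` of the truncated SVD estimator with a
data-dependent truncation rule `τ`, in the Gaussian sequence model
`Y_i = λ_i ν_i + δ ε_i`, `i = 1, …, D` (data outside `{1,…,D}` is set to `0`). -/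
noncomputable def svdRisk {Ω : Type*} [MeasurableSpace Ω] (P : Measure Ω) (D : ℕ)
    (lam : ℕ → ℝ) (δ : ℝ) (ε : ℕ → Ω → ℝ) (τ : (ℕ → ℝ) → ℕ) (ν : ℕ → ℝ) : ℝ :=
  ∫ ω, ∑ i ∈ Finset.Icc 1 D,
    ((if i ≤ τ (fun j => if 1 ≤ j ∧ j ≤ D then lam j * ν j + δ * ε j ω else 0)
        then (lam i)⁻¹ * (lam i * ν i + δ * ε i ω) else 0) - ν i) ^ 2 ∂P

/-!
Because `{τ ≥ i}` is determined by `Y_1, …, Y_{i-1}`, it is independent of `ε_i`, and the risk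
of a stopping rule is explicit:
`R(ν, τ)² = ∑_{i ≤ D} (δ² λ_i⁻² P(τ ≥ i) + ν_i² P(τ < i))`.
Put `m = ⌊3 C m_s⌋`. The first sum gives
`P_μ(τ > m) V_{m+1} ≤ R(μ, τ)² ≤ C R(μ, m_s)² ≤ 2 C V_{m_s}`, while `λ_i⁻²` increasing makes
`V_k / k` increasing, so `V_{m+1} ≥ 3 C V_{m_s}`; hence `P_μ(τ > m) ≤ 2/3`. The event
`{τ ≤ m}` depends only on `Y_1, …, Y_m`, which coincide under `μ` and `μ̄`, so
`P_μ̄(τ ≤ m) ≥ 1/3`, and on that event the loss under `μ̄` is at least `B²_m(μ̄)`.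
-/

lemma integral_sq_gaussianReal_zero_one : ∫ x, x ^ 2 ∂gaussianReal 0 1 = 1 := by
  have h := variance_eq_sub (memLp_id_gaussianReal (μ := 0) (v := 1) 2)
  rw [variance_id_gaussianReal] at h
  simpa [integral_id_gaussianReal] using h.symm

section StandardGaussian

variable {Ω : Type*} [MeasurableSpace Ω] {P : Measure Ω} {X : Ω → ℝ}

lemma integrable_sq_of_map_eq_gaussianReal (hX : Measurable X)
    (h : P.map X = gaussianReal 0 1) : Integrable (fun ω => X ω ^ 2) P := by
  have : Integrable (fun x : ℝ => x ^ 2) (P.map X) :=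
    h ▸ (memLp_id_gaussianReal 2).integrable_sq
  exact (integrable_map_measure (by fun_prop) hX.aemeasurable).mp this

lemma integral_sq_of_map_eq_gaussianReal (hX : Measurable X)
    (h : P.map X = gaussianReal 0 1) : ∫ ω, X ω ^ 2 ∂P = 1 := by
  rw [← integral_sq_gaussianReal_zero_one, ← h, integral_map hX.aemeasurable (by fun_prop)]

end StandardGaussian

lemma card_mul_sum_Icc_le_of_monotoneOn {a : ℕ → ℝ} {k n : ℕ}
    (ha : MonotoneOn a (Set.Icc 1 n)) (hkn : k ≤ n) :
    (n : ℝ) * ∑ i ∈ Icc 1 k, a i ≤ k * ∑ i ∈ Icc 1 n, a i := by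
  have hanti : AntivaryOn a (fun i => if i ≤ k then (1 : ℝ) else 0) (Icc 1 n) := by
    intro i hi j hj hij
    simp only at hij
    split_ifs at hij with hik hjk <;> norm_num at hij
    exact ha (by simpa using hj) (by simpa using hi) (by omega)
  have hfilter : (Icc 1 n).filter (· ≤ k) = Icc 1 k := by
    ext i; simp only [mem_filter, mem_Icc]; omega
  have h := hanti.card_mul_sum_le_sum_mul_sum
  simp only [mul_ite, mul_one, mul_zero, sum_ite, sum_const_zero, add_zero,
    sum_const, nsmul_eq_mul, Nat.card_Icc, hfilter, Nat.add_sub_cancel] at h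
  linarith

namespace SeqModel

def truncate (n : ℕ) (y : ℕ → ℝ) : ℕ → ℝ := fun i => if 1 ≤ i ∧ i ≤ n then y i else 0

lemma measurable_truncate (n : ℕ) : Measurable (truncate n) :=
  measurable_pi_lambda _ fun i => by
    by_cases h : 1 ≤ i ∧ i ≤ n <;> simp [truncate, h, measurable_pi_apply]

/-- `τ` is a stopping time of the frequency filtration `F_n = σ(Y_1, …, Y_n)`, stated on the
data vector: `{τ ≤ n}` is determined by `truncate n y`. -/
def IsFreqStoppingTime (τ : (ℕ → ℝ) → ℕ) : Prop :=
  ∀ n, MeasurableSet[MeasurableSpace.comap (truncate n) inferInstance] {y | τ y ≤ n}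

namespace IsFreqStoppingTime

variable {τ : (ℕ → ℝ) → ℕ}

lemma const (k : ℕ) : IsFreqStoppingTime fun _ => k := fun _ => MeasurableSet.const _

lemma measurableSet_le (hτ : IsFreqStoppingTime τ) (n : ℕ) : MeasurableSet {y | τ y ≤ n} :=
  (measurable_truncate n).comap_le _ (hτ n)

lemma measurable (hτ : IsFreqStoppingTime τ) : Measurable τ :=
  measurable_of_Iic hτ.measurableSet_le

lemma le_iff_of_truncate_eq (hτ : IsFreqStoppingTime τ) {n : ℕ} {y y' : ℕ → ℝ}
    (h : truncate n y = truncate n y') : τ y ≤ n ↔ τ y' ≤ n := by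
  obtain ⟨S, -, hS⟩ := MeasurableSpace.measurableSet_comap.mp (hτ n)
  change y ∈ {y | τ y ≤ n} ↔ y' ∈ {y | τ y ≤ n}
  rw [← hS, Set.mem_preimage, Set.mem_preimage, h]

end IsFreqStoppingTime

-- The variance `V_m` and the squared bias `B²_m(ν)` of the estimator truncated at `m`.
noncomputable def noiseVar (lam : ℕ → ℝ) (δ : ℝ) (m : ℕ) : ℝ :=
  δ ^ 2 * ∑ i ∈ Icc 1 m, ((lam i)⁻¹) ^ 2

def biasSq (D : ℕ) (ν : ℕ → ℝ) (m : ℕ) : ℝ := ∑ i ∈ Icc (m + 1) D, ν i ^ 2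

lemma noiseVar_nonneg (lam : ℕ → ℝ) (δ : ℝ) (m : ℕ) : 0 ≤ noiseVar lam δ m := by
  unfold noiseVar; positivity

section NoiseVar

variable {D : ℕ} {lam : ℕ → ℝ}

lemma natCast_mul_noiseVar_le (δ : ℝ)
    (hlam_pos : ∀ i, 1 ≤ i → i ≤ D → 0 < lam i)
    (hlam_mono : ∀ i j, 1 ≤ i → i ≤ j → j ≤ D → lam j ≤ lam i) {k n : ℕ} (hkn : k ≤ n)
    (hnD : n ≤ D) : (n : ℝ) * noiseVar lam δ k ≤ k * noiseVar lam δ n := by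
  have hmono : MonotoneOn (fun i => ((lam i)⁻¹) ^ 2) (Set.Icc 1 n) := fun i hi j hj hij => by
    have hj_pos := hlam_pos j hj.1 (hj.2.trans hnD)
    have hi_pos := hlam_pos i hi.1 (hi.2.trans hnD)
    exact pow_le_pow_left₀ (inv_nonneg.mpr hi_pos.le)
      (inv_anti₀ hj_pos (hlam_mono i j hi.1 hij (hj.2.trans hnD))) 2
  have h := card_mul_sum_Icc_le_of_monotoneOn hmono hkn
  unfold noiseVar
  nlinarith [sq_nonneg δ]

lemma noiseVar_pos {δ : ℝ} (hδ : 0 < δ) (hlam_pos : ∀ i, 1 ≤ i → i ≤ D → 0 < lam i) {n : ℕ}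
    (hn : 1 ≤ n) (hnD : n ≤ D) : 0 < noiseVar lam δ n := by
  have h1 : 0 < ((lam 1)⁻¹) ^ 2 := by
    have := hlam_pos 1 le_rfl (hn.trans hnD)
    positivity
  exact mul_pos (by positivity) (h1.trans_le (single_le_sum (fun i _ => sq_nonneg ((lam i)⁻¹))
    (mem_Icc.mpr ⟨le_rfl, hn⟩)))

end NoiseVar

section Observations

variable {Ω : Type*} {D : ℕ} {lam : ℕ → ℝ} {δ : ℝ} {ε : ℕ → Ω → ℝ}

-- The data `(Y_1, …, Y_D, 0, 0, …)`: literally the argument of `τ` inside `svdRisk`.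
def obs (D : ℕ) (lam : ℕ → ℝ) (δ : ℝ) (ε : ℕ → Ω → ℝ) (ν : ℕ → ℝ) (ω : Ω) : ℕ → ℝ :=
  truncate D fun j => lam j * ν j + δ * ε j ω

lemma truncate_obs_congr {ν ν' : ℕ → ℝ} {n : ℕ} (h : ∀ i, 1 ≤ i → i ≤ n → ν' i = ν i)
    (ω : Ω) : truncate n (obs D lam δ ε ν' ω) = truncate n (obs D lam δ ε ν ω) := by
  funext i
  simp only [truncate, obs]
  split_ifs <;> simp_all

variable [MeasurableSpace Ω] {P : Measure Ω} {τ : (ℕ → ℝ) → ℕ}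

lemma measurable_obs (hε : ∀ i, Measurable (ε i)) (ν : ℕ → ℝ) :
    Measurable (obs D lam δ ε ν) :=
  (measurable_truncate D).comp (measurable_pi_lambda _ fun j => by fun_prop)

lemma IsFreqStoppingTime.measurable_comp_obs (hτ : IsFreqStoppingTime τ)
    (hε : ∀ i, Measurable (ε i)) (ν : ℕ → ℝ) :
    Measurable fun ω => τ (obs D lam δ ε ν ω) :=
  hτ.measurable.comp (measurable_obs hε ν)

lemma indepFun_truncate_obs (hεmeas : ∀ i, Measurable (ε i))
    (hεindep : iIndepFun ε P) (ν : ℕ → ℝ) (n : ℕ) :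
    IndepFun (fun ω => truncate n (obs D lam δ ε ν ω)) (ε (n + 1)) P := by
  let extend : (Icc 1 n → ℝ) → ℕ → ℝ := fun v j => if h : j ∈ Icc 1 n then v ⟨j, h⟩ else 0
  have hextend : Measurable extend := measurable_pi_lambda _ fun j => by
    by_cases h : j ∈ Icc 1 n
    · simpa only [extend, dif_pos h] using measurable_pi_apply _
    · simpa only [extend, dif_neg h] using measurable_const
  have h := (hεindep.indepFun_finset (Icc 1 n) {n + 1} (by simp) hεmeas).comp
    ((measurable_truncate n).comp <| (measurable_truncate D).comp <|
      measurable_pi_lambda (fun v j => lam j * ν j + δ * extend v j) fun j => by fun_prop)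
    (measurable_pi_apply ⟨n + 1, mem_singleton_self _⟩)
  convert h using 1
  funext ω i
  simp only [Function.comp_apply, truncate, obs, extend]
  split_ifs with h1 h2 <;> simp_all
  rfl

-- `{τ ≥ n + 1} = {τ ≤ n}ᶜ` is determined by `Y_1, …, Y_n`, hence independent of `ε (n + 1)`.
lemma integral_indicator_sq_eq_measureReal (hτ : IsFreqStoppingTime τ)
    (hεmeas : ∀ i, Measurable (ε i)) (hεindep : iIndepFun ε P) (ν : ℕ → ℝ) (n : ℕ)
    (hεgauss : P.map (ε (n + 1)) = gaussianReal 0 1) :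
    ∫ ω, {ω | n + 1 ≤ τ (obs D lam δ ε ν ω)}.indicator (fun ω => ε (n + 1) ω ^ 2) ω ∂P
      = P.real {ω | n + 1 ≤ τ (obs D lam δ ε ν ω)} := by
  obtain ⟨S, hS, hpre⟩ := MeasurableSpace.measurableSet_comap.mp (hτ n)
  set E := {ω | n + 1 ≤ τ (obs D lam δ ε ν ω)}
  have hE : E = (fun ω => truncate n (obs D lam δ ε ν ω)) ⁻¹' Sᶜ := by
    ext ω
    change _ ↔ obs D lam δ ε ν ω ∉ truncate n ⁻¹' S
    simp [E, hpre]
  have hEmeas : MeasurableSet E :=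
    hE ▸ hS.compl.preimage ((measurable_truncate n).comp (measurable_obs hεmeas ν))
  have hind : IndepFun (E.indicator (1 : Ω → ℝ)) (fun ω => ε (n + 1) ω ^ 2) P := by
    rw [hE]
    exact (indepFun_truncate_obs hεmeas hεindep ν n).comp (measurable_const.indicator hS.compl)
      (measurable_id.pow_const 2)
  calc ∫ ω, E.indicator (fun ω => ε (n + 1) ω ^ 2) ω ∂P
      = ∫ ω, E.indicator (1 : Ω → ℝ) ω * ε (n + 1) ω ^ 2 ∂P := by
        congr 1
        funext ω
        simp [Set.indicator_apply]
    _ = (∫ ω, E.indicator (1 : Ω → ℝ) ω ∂P) * ∫ ω, ε (n + 1) ω ^ 2 ∂P :=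
        hind.integral_mul_eq_mul_integral (by fun_prop) (by fun_prop)
    _ = P.real E := by
      rw [integral_indicator_one hEmeas, integral_sq_of_map_eq_gaussianReal (hεmeas _) hεgauss,
        mul_one]

theorem svdRisk_eq_sum [IsFiniteMeasure P] (hlam : ∀ i, 1 ≤ i → i ≤ D → lam i ≠ 0)
    (hτ : IsFreqStoppingTime τ) (hεmeas : ∀ i, Measurable (ε i)) (hεindep : iIndepFun ε P)
    (hεgauss : ∀ i, P.map (ε i) = gaussianReal 0 1) (ν : ℕ → ℝ) :
    svdRisk P D lam δ ε τ ν = ∑ i ∈ Icc 1 D,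
      ((δ * (lam i)⁻¹) ^ 2 * P.real {ω | i ≤ τ (obs D lam δ ε ν ω)}
        + ν i ^ 2 * P.real {ω | τ (obs D lam δ ε ν ω) < i}) := by
  have hτobs := hτ.measurable_comp_obs hεmeas ν (D := D) (lam := lam) (δ := δ)
  have hE (i : ℕ) : MeasurableSet {ω | i ≤ τ (obs D lam δ ε ν ω)} :=
    measurableSet_le measurable_const hτobs
  have hF (i : ℕ) : MeasurableSet {ω | τ (obs D lam δ ε ν ω) < i} :=
    measurableSet_lt hτobs measurable_const
  have hint (i : ℕ) :
      Integrable ({ω | i ≤ τ (obs D lam δ ε ν ω)}.indicator fun ω => ε i ω ^ 2) P :=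
    (integrable_sq_of_map_eq_gaussianReal (hεmeas i) (hεgauss i)).indicator (hE i)
  have hconst (i : ℕ) :
      Integrable ({ω | τ (obs D lam δ ε ν ω) < i}.indicator fun _ => ν i ^ 2) P :=
    (integrable_const _).indicator (hF i)
  have hloss (ω : Ω) (i : ℕ) (hi : i ∈ Icc 1 D) :
      ((if i ≤ τ (obs D lam δ ε ν ω) then (lam i)⁻¹ * (lam i * ν i + δ * ε i ω) else 0)
          - ν i) ^ 2
        = (δ * (lam i)⁻¹) ^ 2
            * {ω | i ≤ τ (obs D lam δ ε ν ω)}.indicator (fun ω => ε i ω ^ 2) ω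
          + {ω | τ (obs D lam δ ε ν ω) < i}.indicator (fun _ => ν i ^ 2) ω := by
    have hlam_i := hlam i (mem_Icc.mp hi).1 (mem_Icc.mp hi).2
    by_cases h : i ≤ τ (obs D lam δ ε ν ω)
    · simp [h]
      field_simp
      ring
    · simp [h, not_le.mp h]
  calc svdRisk P D lam δ ε τ ν
      = ∫ ω, ∑ i ∈ Icc 1 D, ((δ * (lam i)⁻¹) ^ 2
            * {ω | i ≤ τ (obs D lam δ ε ν ω)}.indicator (fun ω => ε i ω ^ 2) ω
          + {ω | τ (obs D lam δ ε ν ω) < i}.indicator (fun _ => ν i ^ 2) ω) ∂P :=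
        integral_congr_ae (.of_forall fun ω => sum_congr rfl (hloss ω))
    _ = _ := by
      rw [integral_finsetSum _ fun i _ => ((hint i).const_mul _).fun_add (hconst i)]
      refine sum_congr rfl fun i hi => ?_
      obtain ⟨n, rfl⟩ : ∃ n, i = n + 1 := ⟨i - 1, by have := (mem_Icc.mp hi).1; omega⟩
      rw [integral_add ((hint _).const_mul _) (hconst _), integral_const_mul,
        integral_indicator_sq_eq_measureReal hτ hεmeas hεindep ν n (hεgauss _),
        integral_indicator_const _ (hF _), smul_eq_mul, mul_comm (P.real _)]

lemma svdRisk_const [IsProbabilityMeasure P] (hlam : ∀ i, 1 ≤ i → i ≤ D → lam i ≠ 0)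
    (hεmeas : ∀ i, Measurable (ε i)) (hεindep : iIndepFun ε P)
    (hεgauss : ∀ i, P.map (ε i) = gaussianReal 0 1) (ν : ℕ → ℝ) {k : ℕ} (hkD : k ≤ D) :
    svdRisk P D lam δ ε (fun _ => k) ν = noiseVar lam δ k + biasSq D ν k := by
  have hsplit : Icc 1 D = Icc 1 k ∪ Icc (k + 1) D := by
    ext i; simp only [mem_union, mem_Icc]; omega
  have hdisj : Disjoint (Icc 1 k) (Icc (k + 1) D) :=
    disjoint_left.mpr fun i hi hi' => by simp only [mem_Icc] at hi hi'; omega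
  rw [svdRisk_eq_sum hlam (IsFreqStoppingTime.const k) hεmeas hεindep hεgauss, hsplit,
    sum_union hdisj, noiseVar, biasSq, mul_sum]
  congr 1
  · refine sum_congr rfl fun i hi => ?_
    have hik : i ≤ k := (mem_Icc.mp hi).2
    simp [hik, not_lt.mpr hik, mul_pow]
  · refine sum_congr rfl fun i hi => ?_
    have hki : k < i := (mem_Icc.mp hi).1
    simp [hki, not_le.mpr hki]

lemma measureReal_mul_noiseVar_le_svdRisk [IsFiniteMeasure P]
    (hlam : ∀ i, 1 ≤ i → i ≤ D → lam i ≠ 0) (hτ : IsFreqStoppingTime τ)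
    (hεmeas : ∀ i, Measurable (ε i)) (hεindep : iIndepFun ε P)
    (hεgauss : ∀ i, P.map (ε i) = gaussianReal 0 1) (ν : ℕ → ℝ) {n : ℕ} (hnD : n ≤ D) :
    P.real {ω | n ≤ τ (obs D lam δ ε ν ω)} * noiseVar lam δ n ≤ svdRisk P D lam δ ε τ ν := by
  rw [svdRisk_eq_sum hlam hτ hεmeas hεindep hεgauss]
  calc P.real {ω | n ≤ τ (obs D lam δ ε ν ω)} * noiseVar lam δ n
      = ∑ i ∈ Icc 1 n, (δ * (lam i)⁻¹) ^ 2 * P.real {ω | n ≤ τ (obs D lam δ ε ν ω)} := by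
        simp only [noiseVar, mul_sum]
        exact sum_congr rfl fun i _ => by ring
    _ ≤ ∑ i ∈ Icc 1 n, (δ * (lam i)⁻¹) ^ 2 * P.real {ω | i ≤ τ (obs D lam δ ε ν ω)} :=
        sum_le_sum fun i hi => mul_le_mul_of_nonneg_left
          (measureReal_mono fun ω (hω : n ≤ _) => (mem_Icc.mp hi).2.trans hω) (sq_nonneg _)
    _ ≤ ∑ i ∈ Icc 1 D, (δ * (lam i)⁻¹) ^ 2 * P.real {ω | i ≤ τ (obs D lam δ ε ν ω)} :=
        sum_le_sum_of_subset_of_nonneg (Icc_subset_Icc_right hnD) fun i _ _ => by positivity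
    _ ≤ _ := sum_le_sum fun i _ => le_add_of_nonneg_right (by positivity)

lemma measureReal_mul_biasSq_le_svdRisk [IsFiniteMeasure P]
    (hlam : ∀ i, 1 ≤ i → i ≤ D → lam i ≠ 0) (hτ : IsFreqStoppingTime τ)
    (hεmeas : ∀ i, Measurable (ε i)) (hεindep : iIndepFun ε P)
    (hεgauss : ∀ i, P.map (ε i) = gaussianReal 0 1) (ν : ℕ → ℝ) (n : ℕ) :
    P.real {ω | τ (obs D lam δ ε ν ω) ≤ n} * biasSq D ν n ≤ svdRisk P D lam δ ε τ ν := by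
  rw [svdRisk_eq_sum hlam hτ hεmeas hεindep hεgauss, biasSq, mul_sum]
  calc ∑ i ∈ Icc (n + 1) D, P.real {ω | τ (obs D lam δ ε ν ω) ≤ n} * ν i ^ 2
      ≤ ∑ i ∈ Icc (n + 1) D, ν i ^ 2 * P.real {ω | τ (obs D lam δ ε ν ω) < i} := by
        refine sum_le_sum fun i hi => ?_
        rw [mul_comm]
        exact mul_le_mul_of_nonneg_left
          (measureReal_mono fun ω (hω : _ ≤ n) => hω.trans_lt (mem_Icc.mp hi).1) (sq_nonneg _)
    _ ≤ ∑ i ∈ Icc 1 D, ν i ^ 2 * P.real {ω | τ (obs D lam δ ε ν ω) < i} :=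
        sum_le_sum_of_subset_of_nonneg (Icc_subset_Icc_left (by omega))
          fun i _ _ => by positivity
    _ ≤ _ := sum_le_sum fun i _ => le_add_of_nonneg_left (by positivity)

lemma measureReal_le_stop_le_two_thirds [IsProbabilityMeasure P] (hδ : 0 < δ)
    (hlam_pos : ∀ i, 1 ≤ i → i ≤ D → 0 < lam i)
    (hlam_mono : ∀ i j, 1 ≤ i → i ≤ j → j ≤ D → lam j ≤ lam i)
    (hτ : IsFreqStoppingTime τ) (hεmeas : ∀ i, Measurable (ε i)) (hεindep : iIndepFun ε P)
    (hεgauss : ∀ i, P.map (ε i) = gaussianReal 0 1) {μ : ℕ → ℝ} {ms n : ℕ} {C : ℝ}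
    (hC : 1 ≤ C) (hbal : biasSq D μ ms ≤ noiseVar lam δ ms)
    (hrisk : svdRisk P D lam δ ε τ μ ≤ C * svdRisk P D lam δ ε (fun _ => ms) μ)
    (hn : 3 * C * ms ≤ n) (hn1 : 1 ≤ n) (hnD : n ≤ D) :
    P.real {ω | n ≤ τ (obs D lam δ ε μ ω)} ≤ 2 / 3 := by
  have hlam : ∀ i, 1 ≤ i → i ≤ D → lam i ≠ 0 := fun i h1 h2 => (hlam_pos i h1 h2).ne'
  have hms0 : (0 : ℝ) ≤ ms := ms.cast_nonneg
  have hmsn : ms ≤ n := by exact_mod_cast (show (ms : ℝ) ≤ n by nlinarith)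
  have hVms := noiseVar_nonneg lam δ ms
  have hVn := noiseVar_pos hδ hlam_pos hn1 hnD
  have hgrowth : 3 * C * noiseVar lam δ ms ≤ noiseVar lam δ n := by
    rcases Nat.eq_zero_or_pos ms with rfl | hms
    · simpa [noiseVar] using hVn.le
    · have h := natCast_mul_noiseVar_le δ hlam_pos hlam_mono hmsn hnD
      refine le_of_mul_le_mul_left ?_ (show (0 : ℝ) < ms by exact_mod_cast hms)
      nlinarith
  rw [svdRisk_const hlam hεmeas hεindep hεgauss μ (hmsn.trans hnD)] at hrisk
  refine le_of_mul_le_mul_right ?_ hVn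
  calc P.real {ω | n ≤ τ (obs D lam δ ε μ ω)} * noiseVar lam δ n
      ≤ svdRisk P D lam δ ε τ μ :=
        measureReal_mul_noiseVar_le_svdRisk hlam hτ hεmeas hεindep hεgauss μ hnD
    _ ≤ C * (noiseVar lam δ ms + biasSq D μ ms) := hrisk
    _ ≤ 2 / 3 * noiseVar lam δ n := by nlinarith

end Observations

end SeqModel

open SeqModel

theorem frequency_no_adaptation_general
    {Ω : Type*} [MeasurableSpace Ω] (P : Measure Ω) [IsProbabilityMeasure P]
    (D : ℕ) (lam μ μbar : ℕ → ℝ) (δ : ℝ) (hδ : 0 < δ)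
    (hlam_pos : ∀ i, 1 ≤ i → i ≤ D → 0 < lam i)
    (hlam_mono : ∀ i j, 1 ≤ i → i ≤ j → j ≤ D → lam j ≤ lam i)
    (ε : ℕ → Ω → ℝ) (hεmeas : ∀ i, Measurable (ε i))
    (hεindep : iIndepFun ε P)
    (hεgauss : ∀ i, Measure.map (ε i) P = gaussianReal 0 1)
    (τ : (ℕ → ℝ) → ℕ)
    (hstop : ∀ n : ℕ,
      MeasurableSet[MeasurableSpace.comap
        (fun (y : ℕ → ℝ) (i : ℕ) => if 1 ≤ i ∧ i ≤ n then y i else 0) inferInstance]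
        {y : ℕ → ℝ | τ y ≤ n})
    -- the strongly balanced oracle m_s(μ) = min{m : V_m ≥ B_m²(μ)}
    (ms : ℕ)
    (hms_bal : δ ^ 2 * ∑ i ∈ Finset.Icc 1 ms, ((lam i)⁻¹) ^ 2
        ≥ ∑ i ∈ Finset.Icc (ms + 1) D, (μ i) ^ 2)
    (C : ℝ) (hC : 1 ≤ C)
    (hrisk : svdRisk P D lam δ ε τ μ ≤ C * svdRisk P D lam δ ε (fun _ => ms) μ)
    (hagree : ∀ i : ℕ, 1 ≤ i → ((i : ℕ) : ℝ) ≤ 3 * C * ms → μbar i = μ i) :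
    svdRisk P D lam δ ε τ μbar
      ≥ (1 / 3) * ∑ i ∈ Finset.Icc (⌊3 * C * (ms : ℝ)⌋₊ + 1) D, (μbar i) ^ 2 := by
  have hlam : ∀ i, 1 ≤ i → i ≤ D → lam i ≠ 0 := fun i h1 h2 => (hlam_pos i h1 h2).ne'
  have hτ : IsFreqStoppingTime τ := hstop
  set m := ⌊3 * C * (ms : ℝ)⌋₊
  rcases le_or_gt D m with hDm | hmD
  · rw [Icc_eq_empty (by omega), sum_empty, mul_zero]
    exact integral_nonneg fun ω => sum_nonneg fun i _ => sq_nonneg _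
  have hlate : P.real {ω | m + 1 ≤ τ (obs D lam δ ε μ ω)} ≤ 2 / 3 :=
    measureReal_le_stop_le_two_thirds hδ hlam_pos hlam_mono hτ hεmeas hεindep hεgauss hC hms_bal
      hrisk (by exact_mod_cast (Nat.lt_floor_add_one _).le) le_add_self hmD
  have hearly : {ω | τ (obs D lam δ ε μbar ω) ≤ m} = {ω | m + 1 ≤ τ (obs D lam δ ε μ ω)}ᶜ := by
    ext ω
    change _ ↔ ¬ m + 1 ≤ _
    rw [not_le, Nat.lt_succ_iff]
    exact hτ.le_iff_of_truncate_eq (truncate_obs_congr (fun i hi him =>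
      hagree i hi ((Nat.le_floor_iff (by positivity)).mp him)) ω)
  have hprob : 1 / 3 ≤ P.real {ω | τ (obs D lam δ ε μbar ω) ≤ m} := by
    rw [hearly, probReal_compl_eq_one_sub
      (measurableSet_le measurable_const (hτ.measurable_comp_obs hεmeas μ))]
    linarith
  calc 1 / 3 * biasSq D μbar m
      ≤ P.real {ω | τ (obs D lam δ ε μbar ω) ≤ m} * biasSq D μbar m :=
        mul_le_mul_of_nonneg_right hprob (sum_nonneg fun i _ => sq_nonneg _)
    _ ≤ svdRisk P D lam δ ε τ μbar :=
        measureReal_mul_biasSq_le_svdRisk hlam hτ hεmeas hεindep hεgauss μbar m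

/-- if a frequency-filtration stopping rule `τ` has risk within a
factor `C ≥ 1` of the risk of the balanced oracle `m_s(μ)` at `μ`, then for any
`μ̄` agreeing with `μ` up to index `3C·m_s`,
`R(μ̄,τ)² ≥ (1/3)·B²_{⌊3C m_s⌋}(μ̄)`. -/
theorem frequency_no_adaptation
    {Ω : Type*} [MeasurableSpace Ω] (P : Measure Ω) [IsProbabilityMeasure P]
    (D : ℕ) (lam μ μbar : ℕ → ℝ) (δ : ℝ) (hδ : 0 < δ)
    (hlam_pos : ∀ i, 1 ≤ i → i ≤ D → 0 < lam i)
    (hlam_mono : ∀ i j, 1 ≤ i → i ≤ j → j ≤ D → lam j ≤ lam i)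
    (ε : ℕ → Ω → ℝ) (hεmeas : ∀ i, Measurable (ε i))
    (hεindep : iIndepFun ε P)
    (hεgauss : ∀ i, Measure.map (ε i) P = gaussianReal 0 1)
    (τ : (ℕ → ℝ) → ℕ) (hτD : ∀ y, τ y ≤ D)
    (hstop : ∀ n : ℕ,
      MeasurableSet[MeasurableSpace.comap
        (fun (y : ℕ → ℝ) (i : ℕ) => if 1 ≤ i ∧ i ≤ n then y i else 0) inferInstance]
        {y : ℕ → ℝ | τ y ≤ n})
    -- the strongly balanced oracle m_s(μ) = min{m : V_m ≥ B_m²(μ)}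
    (ms : ℕ) (hmsD : ms ≤ D)
    (hms_bal : δ ^ 2 * ∑ i ∈ Finset.Icc 1 ms, ((lam i)⁻¹) ^ 2
        ≥ ∑ i ∈ Finset.Icc (ms + 1) D, (μ i) ^ 2)
    (hms_min : ∀ m, m < ms →
        δ ^ 2 * ∑ i ∈ Finset.Icc 1 m, ((lam i)⁻¹) ^ 2
          < ∑ i ∈ Finset.Icc (m + 1) D, (μ i) ^ 2)
    (C : ℝ) (hC : 1 ≤ C)
    (hrisk : svdRisk P D lam δ ε τ μ ≤ C * svdRisk P D lam δ ε (fun _ => ms) μ)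
    (hagree : ∀ i : ℕ, 1 ≤ i → ((i : ℕ) : ℝ) ≤ 3 * C * ms → μbar i = μ i) :
    svdRisk P D lam δ ε τ μbar
      ≥ (1 / 3) * ∑ i ∈ Finset.Icc (⌊3 * C * (ms : ℝ)⌋₊ + 1) D, (μbar i) ^ 2 :=
  frequency_no_adaptation_general P D lam μ μbar δ hδ hlam_pos hlam_mono ε hεmeas hεindep hεgauss τ
    hstop ms hms_bal C hC hrisk hagree
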